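/- Let f : W → ℂ be holomorphic on an open set W ⊆ ℂ, let z₀ ∈ W with f′(z₀) = 0 and f″(z₀) ≠ 0. Then there exist δ ∈ (0,1), an open neighborhood U of z₀, and a biholomorphic map h : B(0,δ) → U with h(0) = z₀, h′(0) = 1, and f(h(w)) = f(z₀) + (1/2) f″(z₀) w² for all w ∈ B(0,δ). -/

import Mathlib

open Complex Metric Set Filter Topology

/-- Complex Morse lemma: near a non-degenerate saddle point `z₀` of a holomorphic
function `f`, there is a holomorphic change of coordinates `h` with `h(0) = z₀`,
`h'(0) = 1`, normalizing `f` to its quadratic part. -/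
theorem complex_morse_lemma (W : Set ℂ) (hW : IsOpen W) (f : ℂ → ℂ)
    (hf : DifferentiableOn ℂ f W) (z₀ : ℂ) (hz₀ : z₀ ∈ W)
    (hcrit : deriv f z₀ = 0) (hnd : deriv (deriv f) z₀ ≠ 0) :
    ∃ δ ∈ Set.Ioo (0 : ℝ) 1, ∃ U : Set ℂ, IsOpen U ∧ z₀ ∈ U ∧ U ⊆ W ∧
      ∃ h : ℂ → ℂ, Set.BijOn h (Metric.ball (0 : ℂ) δ) U ∧
        DifferentiableOn ℂ h (Metric.ball (0 : ℂ) δ) ∧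
        h 0 = z₀ ∧ deriv h 0 = 1 ∧
        ∀ w ∈ Metric.ball (0 : ℂ) δ,
          f (h w) = f z₀ + (1 / 2) * deriv (deriv f) z₀ * w ^ 2 := by
  set g : ℂ → ℂ := dslope (dslope f z₀) z₀ with hg_def
  have hfa : AnalyticAt ℂ f z₀ := hf.analyticAt (hW.mem_nhds hz₀)
  obtain ⟨p, hp⟩ := hfa
  have hga : AnalyticAt ℂ g z₀ :=
    ⟨p.fslope.fslope, hp.has_fpower_series_dslope_fslope.has_fpower_series_dslope_fslope⟩
  -- factorization
  have key : ∀ z, f z = f z₀ + (z - z₀) ^ 2 * g z := by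
    intro z
    have h1 : (z - z₀) • g z = dslope f z₀ z - dslope f z₀ z₀ :=
      sub_smul_dslope (dslope f z₀) z₀ z
    have h2 : (z - z₀) • dslope f z₀ z = f z - f z₀ := sub_smul_dslope f z₀ z
    rw [dslope_same, hcrit, sub_zero, smul_eq_mul] at h1
    rw [smul_eq_mul] at h2
    linear_combination -(z - z₀) * h1 - h2
  -- a neighborhood of z₀ where g is analytic
  obtain ⟨E₀, hE₀, hE₀o, hE₀z⟩ := _root_.eventually_nhds_iff.mp hga.eventually_analyticAt
  set E : Set ℂ := E₀ ∩ W with hE_def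
  have hEo : IsOpen E := hE₀o.inter hW
  have hEz : z₀ ∈ E := ⟨hE₀z, hz₀⟩
  have hgE : AnalyticOnNhd ℂ g E := fun z hz => hE₀ z hz.1
  set c : ℂ := g z₀ with hc_def
  have hdg : ∀ z ∈ E, HasDerivAt g (deriv g z) z := fun z hz =>
    ((hgE z hz).differentiableAt).hasDerivAt
  -- second derivative of f at z₀ is 2c
  have hderiv_f : ∀ z ∈ E, deriv f z = 2 * (z - z₀) * g z + (z - z₀) ^ 2 * deriv g z := by
    intro z hz
    have hpow : HasDerivAt (fun z => (z - z₀) ^ 2) (2 * (z - z₀)) z := by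
      have h := ((hasDerivAt_id z).sub_const z₀).pow 2; simp at h; exact h
    have h1 : HasDerivAt (fun z => f z₀ + (z - z₀) ^ 2 * g z)
        (2 * (z - z₀) * g z + (z - z₀) ^ 2 * deriv g z) z :=
      (hpow.mul (hdg z hz)).const_add (f z₀)
    have h2 : HasDerivAt f (2 * (z - z₀) * g z + (z - z₀) ^ 2 * deriv g z) z :=
      h1.congr_of_eventuallyEq (Filter.Eventually.of_forall key)
    exact h2.deriv
  have hg'E : AnalyticOnNhd ℂ (deriv g) E := hgE.deriv
  have hsecond : deriv (deriv f) z₀ = 2 * c := by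
    have hev : deriv f =ᶠ[𝓝 z₀]
        fun z => 2 * (z - z₀) * g z + (z - z₀) ^ 2 * deriv g z :=
      Filter.eventually_of_mem (hEo.mem_nhds hEz) hderiv_f
    have ha : HasDerivAt (fun z => 2 * (z - z₀) * g z) (2 * c) z₀ := by
      have h1 : HasDerivAt (fun z => 2 * (z - z₀)) 2 z₀ := by
        simpa using ((hasDerivAt_id z₀).sub_const z₀).const_mul (2 : ℂ)
      have h := h1.mul (hdg z₀ hEz); simp at h; exact h
    have hb : HasDerivAt (fun z => (z - z₀) ^ 2 * deriv g z) 0 z₀ := by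
      have hpow : HasDerivAt (fun z => (z - z₀) ^ 2) 0 z₀ := by
        have h := ((hasDerivAt_id z₀).sub_const z₀).pow 2; simp at h; exact h
      have hdg' : HasDerivAt (deriv g) (deriv (deriv g) z₀) z₀ :=
        ((hg'E z₀ hEz).differentiableAt).hasDerivAt
      have h := hpow.mul hdg'; simp at h; exact h
    rw [hev.deriv_eq]
    exact (ha.add hb).deriv.trans (add_zero _)
  have hc_ne : c ≠ 0 := by
    intro h
    exact hnd (by rw [hsecond, h, mul_zero])
  -- the square root change of variable
  set ρ : ℂ → ℂ := fun z => Complex.exp ((1 / 2 : ℂ) * Complex.log (g z / c)) with hρ_def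
  set ψ : ℂ → ℂ := fun z => (z - z₀) * ρ z with hψ_def
  set E' : Set ℂ := E ∩ (fun z => g z / c) ⁻¹' {w : ℂ | 0 < w.re} with hE'_def
  have hE'o : IsOpen E' := by
    apply ContinuousOn.isOpen_inter_preimage _ hEo
    · exact isOpen_lt continuous_const Complex.continuous_re
    · exact (hgE.continuousOn).div_const c
  have hE'z : z₀ ∈ E' := by
    refine ⟨hEz, ?_⟩
    simp [← hc_def, div_self hc_ne]
  have hgne : ∀ z ∈ E', g z / c ≠ 0 := by
    intro z hz h
    have := hz.2
    rw [Set.mem_preimage, h] at this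
    simp at this
  have hρdiff : ∀ z ∈ E', DifferentiableAt ℂ ρ z := by
    intro z hz
    have hgd : DifferentiableAt ℂ (fun z => g z / c) z :=
      ((hgE z hz.1).differentiableAt).div_const c
    exact ((hgd.clog (Complex.mem_slitPlane_iff.mpr (Or.inl hz.2))).const_mul _).cexp
  have hψdiff : ∀ z ∈ E', DifferentiableAt ℂ ψ z := fun z hz =>
    (differentiableAt_id.sub_const z₀).mul (hρdiff z hz)
  have hsq : ∀ z ∈ E', c * ψ z ^ 2 = f z - f z₀ := by
    intro z hz
    have hρsq : ρ z ^ 2 = g z / c := by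
      rw [hρ_def]
      rw [sq, ← Complex.exp_add]
      have : (1 / 2 : ℂ) * Complex.log (g z / c) + (1 / 2 : ℂ) * Complex.log (g z / c)
          = Complex.log (g z / c) := by ring
      rw [this, Complex.exp_log (hgne z hz)]
    have : c * ψ z ^ 2 = (z - z₀) ^ 2 * g z := by
      rw [hψ_def]
      simp only [mul_pow, hρsq]
      field_simp
    rw [this, key z]
    ring
  have hψz₀ : ψ z₀ = 0 := by simp [hψ_def]
  have hρz₀ : ρ z₀ = 1 := by simp [hρ_def, ← hc_def, div_self hc_ne]
  have hψ'₁ : HasDerivAt ψ 1 z₀ := by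
    have h1 : HasDerivAt (fun z => z - z₀) 1 z₀ := (hasDerivAt_id z₀).sub_const z₀
    have h2 : HasDerivAt ρ (deriv ρ z₀) z₀ := (hρdiff z₀ hE'z).hasDerivAt
    have h := h1.mul h2; simp [hρz₀] at h; exact h
  have hψdo : DifferentiableOn ℂ ψ E' := fun z hz => (hψdiff z hz).differentiableWithinAt
  have hψan : AnalyticOnNhd ℂ ψ E' := hψdo.analyticOnNhd hE'o
  have hstrictAt : ∀ z ∈ E', HasStrictDerivAt ψ (deriv ψ z) z := by
    intro z hz
    obtain ⟨q, hq⟩ := hψan z hz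
    rw [hq.deriv]
    exact hq.hasStrictDerivAt
  have hstrict : HasStrictDerivAt ψ 1 z₀ := by
    have := hstrictAt z₀ hE'z
    rwa [hψ'₁.deriv] at this
  set hσ := hstrict.hasStrictFDerivAt_equiv one_ne_zero with hσ_def
  set P : OpenPartialHomeomorph ℂ ℂ := hσ.toOpenPartialHomeomorph ψ with hP_def
  have hPcoe : ⇑P = ψ := hσ.toOpenPartialHomeomorph_coe
  have hz₀src : z₀ ∈ P.source := hσ.mem_toOpenPartialHomeomorph_source
  set V : Set ℂ := P.source ∩ (E' ∩ deriv ψ ⁻¹' {(0 : ℂ)}ᶜ) with hV_def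
  have hVo : IsOpen V := by
    apply P.open_source.inter
    exact ContinuousOn.isOpen_inter_preimage (hψan.deriv.continuousOn) hE'o
      isOpen_compl_singleton
  have hz₀V : z₀ ∈ V := ⟨hz₀src, hE'z, by simp [hψ'₁.deriv]⟩
  have himg : IsOpen (ψ '' V) := by
    rw [← hPcoe]
    exact P.isOpen_image_of_subset_source hVo inter_subset_left
  have h0img : (0 : ℂ) ∈ ψ '' V := ⟨z₀, hz₀V, hψz₀⟩
  obtain ⟨ε, hε, hball⟩ := Metric.isOpen_iff.mp himg 0 h0img
  set δ : ℝ := min (ε / 2) (1 / 2) with hδ_def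
  have hδpos : 0 < δ := lt_min (by linarith) (by norm_num)
  have hδlt : δ < 1 := lt_of_le_of_lt (min_le_right _ _) (by norm_num)
  have hballsub : Metric.ball (0 : ℂ) δ ⊆ ψ '' V :=
    subset_trans (Metric.ball_subset_ball (le_trans (min_le_left _ _) (by linarith))) hball
  set U : Set ℂ := V ∩ ψ ⁻¹' Metric.ball (0 : ℂ) δ with hU_def
  have hUo : IsOpen U :=
    ContinuousOn.isOpen_inter_preimage
      (fun z hz => (hψdiff z hz.2.1).continuousAt.continuousWithinAt) hVo Metric.isOpen_ball
  have hz₀U : z₀ ∈ U := ⟨hz₀V, by simp [hψz₀, hδpos]⟩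
  have hUW : U ⊆ W := fun z hz => hz.1.2.1.1.2
  have hsubtarget : ∀ w ∈ ψ '' V, w ∈ P.target := by
    rintro w ⟨z, hz, rfl⟩
    rw [← hPcoe]
    exact P.map_source hz.1
  have hleft : ∀ z ∈ V, P.symm (ψ z) = z := by
    intro z hz
    rw [← hPcoe]
    exact P.left_inv hz.1
  have hright : ∀ w ∈ P.target, ψ (P.symm w) = w := by
    intro w hw
    rw [← hPcoe]
    exact P.right_inv hw
  have hmaps : ∀ w ∈ Metric.ball (0 : ℂ) δ, P.symm w ∈ U := by
    intro w hw
    obtain ⟨z, hzV, e⟩ := hballsub hw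
    have hz' : P.symm w = z := by rw [← e, hleft z hzV]
    rw [hz']
    exact ⟨hzV, by rw [Set.mem_preimage, e]; exact hw⟩
  refine ⟨δ, ⟨hδpos, hδlt⟩, U, hUo, hz₀U, hUW, ⇑P.symm, ?_, ?_, ?_, ?_, ?_⟩
  · refine ⟨hmaps, ?_, ?_⟩
    · intro a ha b hb hab
      have ha' : ψ (P.symm a) = a := hright a (hsubtarget a (hballsub ha))
      have hb' : ψ (P.symm b) = b := hright b (hsubtarget b (hballsub hb))
      rw [← ha', ← hb', hab]
    · intro z hz
      exact ⟨ψ z, hz.2, hleft z hz.1⟩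
  · intro w hw
    have hwt : w ∈ P.target := hsubtarget w (hballsub hw)
    have hzU : P.symm w ∈ U := hmaps w hw
    have hstr : HasStrictDerivAt (⇑P) (deriv ψ (P.symm w)) (P.symm w) := by
      rw [hPcoe]
      exact hstrictAt _ hzU.1.2.1
    exact (P.hasStrictDerivAt_symm hwt hzU.1.2.2 hstr).hasDerivAt.differentiableAt.differentiableWithinAt
  · have := hleft z₀ hz₀V
    rwa [hψz₀] at this
  · have h0t : (0 : ℂ) ∈ P.target := hsubtarget 0 h0img
    have hP0 : P.symm 0 = z₀ := by
      have := hleft z₀ hz₀V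
      rwa [hψz₀] at this
    have hstr : HasStrictDerivAt (⇑P) 1 (P.symm 0) := by
      rw [hPcoe, hP0]
      exact hstrict
    simpa using (P.hasStrictDerivAt_symm h0t one_ne_zero hstr).hasDerivAt.deriv
  · intro w hw
    have hzU : P.symm w ∈ U := hmaps w hw
    have hfw : c * ψ (P.symm w) ^ 2 = f (P.symm w) - f z₀ := hsq _ hzU.1.2.1
    rw [hright w (hsubtarget w (hballsub hw))] at hfw
    rw [hsecond]
    linear_combination -hfw
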